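/- arXiv:2106.10808 — 3 statements merged into one kernel-verified Lean document; each statement's English description precedes it below -/
import Mathlib

section
/- Let B be a real symmetric positive definite 3×3 matrix with det B = 1. Then for every real symmetric 3×3 matrix M, tr(B⁻¹·M) = 2·tr(ℂ(B):M). -/
open Matrix MeasureTheory

noncomputable section

/-- 3×3 real matrices. -/
abbrev Mat3 := Matrix (Fin 3) (Fin 3) ℝ

/-- Rank-4 tensors on ℝ³. -/
abbrev Tens4 := Fin 3 → Fin 3 → Fin 3 → Fin 3 → ℝ

/-- Tensor (outer) product of two matrices: `(K ⊗ L)_{ijkl} = K_{ij} L_{kl}`. -/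
def otimes (K L : Mat3) : Tens4 := fun i j k l => K i j * L k l

/-- Symmetrization of a rank-4 tensor: the average over all 24 permutations of the indices. -/
def symmetrize (T : Tens4) : Tens4 := fun i j k l =>
  (∑ σ : Equiv.Perm (Fin 4),
      T (![i, j, k, l] (σ 0)) (![i, j, k, l] (σ 1)) (![i, j, k, l] (σ 2)) (![i, j, k, l] (σ 3)))
    / 24

/-- Contraction of a rank-4 tensor with a matrix: `(𝔹:M)_{ij} = Σ_{k,l} 𝔹_{ijkl} M_{kl}`. -/
def contr (T : Tens4) (M : Mat3) : Mat3 :=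
  Matrix.of fun i j => ∑ k, ∑ l, T i j k l * M k l

/-- Full contraction `N:𝔹:M = Σ_{i,j,k,l} N_{ij} 𝔹_{ijkl} M_{kl}`. -/
def dcontr (N : Mat3) (T : Tens4) (M : Mat3) : ℝ :=
  ∑ i, ∑ j, ∑ k, ∑ l, N i j * T i j k l * M k l

/-- The matrix `(B + s·I)⁻¹` (matrix inverse). -/
def res (B : Mat3) (s : ℝ) : Mat3 := (B + s • (1 : Mat3))⁻¹

/-- `A(B) = (1/2)·∫₀^∞ (B + s·I)⁻¹ / √(det(B + s·I)) ds`, entrywise. -/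
def Amat (B : Mat3) : Mat3 :=
  Matrix.of fun i j =>
    (1 / 2) * ∫ s in Set.Ioi (0 : ℝ),
      res B s i j / Real.sqrt (B + s • (1 : Mat3)).det

/-- `𝔸(B) = (3/4)·∫₀^∞ s·S((B+sI)⁻¹ ⊗ (B+sI)⁻¹) / √(det(B+sI)) ds`, entrywise. -/
def Atens (B : Mat3) : Tens4 := fun i j k l =>
  (3 / 4) * ∫ s in Set.Ioi (0 : ℝ),
    s * symmetrize (otimes (res B s) (res B s)) i j k l
      / Real.sqrt (B + s • (1 : Mat3)).det

/-- `ℂ(B) = (3/4)·∫₀^∞ S((B+sI)⁻¹ ⊗ (B+sI)⁻¹) / √(det(B+sI)) ds`, entrywise. -/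
def Ctens (B : Mat3) : Tens4 := fun i j k l =>
  (3 / 4) * ∫ s in Set.Ioi (0 : ℝ),
    symmetrize (otimes (res B s) (res B s)) i j k l
      / Real.sqrt (B + s • (1 : Mat3)).det

end

/-!
Write `R = (B + sI)⁻¹`. For symmetric `R` the symmetrization collapses to
`S(R ⊗ R)_{ijkl} = (R_ij R_kl + R_ik R_jl + R_il R_jk) / 3`, so
`tr(S(R ⊗ R) : M) = (tr R · tr(RM) + 2 tr(R²M)) / 3`. Since `R' = -R²` and
`(det(B + sI))' = det(B + sI) · tr R`, this numerator divided by `√det(B + sI)` is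
`-2 d/ds [tr(RM) / √det(B + sI)]`, and the primitive tends to `0` at infinity, so the
integral equals `2 tr(B⁻¹M) / √det B`. In dimension three the derivative computation is
polynomial: `R = adj(B + sI) / det(B + sI)` with `adj(B + sI)` quadratic in `s`.

Integrability comes for free from the case `M = I`: there the integrand is nonnegative, so it
is integrable as the derivative of a monotone function with a limit, and it dominates every
product `R_ab R_cd / √det(B + sI)` because `|R_ab R_cd| ≤ tr(R²)`.
-/

open Set Filter Topology

namespace Matrix

variable {R : Type*} [CommRing R]

theorem det_add_smul_one_fin_three (A : Matrix (Fin 3) (Fin 3) R) (s : R) :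
    (A + s • 1).det = s ^ 3 + A.trace * s ^ 2 + A.adjugate.trace * s + A.det := by
  simp [det_fin_three, adjugate_fin_three, trace_fin_three]
  ring

theorem adjugate_add_smul_one_fin_three (A : Matrix (Fin 3) (Fin 3) R) (s : R) :
    (A + s • 1).adjugate = s ^ 2 • 1 + s • (A.trace • 1 - A) + A.adjugate := by
  ext i j
  fin_cases i <;> fin_cases j <;> simp [adjugate_fin_three, trace_fin_three] <;> ring

/- For invertible `A`, multiplying by `A² / det A` turns this into Cayley–Hamilton,
`A³ - tr A · A² + tr (adj A) · A - det A = 0`. -/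
theorem adjugate_mul_adjugate_fin_three (A : Matrix (Fin 3) (Fin 3) R) :
    A.adjugate * A.adjugate = A.adjugate.trace • A.adjugate - A.det • (A.trace • 1 - A) := by
  ext i j
  fin_cases i <;> fin_cases j <;>
    simp [adjugate_fin_three, trace_fin_three, det_fin_three, mul_apply, Fin.sum_univ_three] <;>
    ring

theorem trace_adjugate_mul_adjugate_mul_fin_three (A M : Matrix (Fin 3) (Fin 3) R) :
    (A.adjugate * A.adjugate * M).trace =
      A.adjugate.trace * (A.adjugate * M).trace - A.det * ((A.trace • 1 - A) * M).trace := by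
  rw [adjugate_mul_adjugate_fin_three, sub_mul, trace_sub, smul_mul, smul_mul, trace_smul,
    trace_smul, smul_eq_mul, smul_eq_mul]

variable {n : Type*}

theorem IsSymm.trace_mul_self [Fintype n] {A : Matrix n n ℝ} (hA : A.IsSymm) :
    (A * A).trace = ∑ i, ∑ j, A i j ^ 2 := by
  simp only [trace, diag, mul_apply, sq]
  refine Finset.sum_congr rfl fun i _ => Finset.sum_congr rfl fun j _ => ?_
  rw [hA.apply i j]

theorem IsSymm.abs_mul_apply_le_trace_mul_self [Fintype n] {A : Matrix n n ℝ} (hA : A.IsSymm)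
    (a b c d : n) :
    |A a b * A c d| ≤ (A * A).trace := by
  have hle : ∀ x y, A x y ^ 2 ≤ (A * A).trace := fun x y => by
    rw [hA.trace_mul_self]
    exact (Finset.single_le_sum (f := fun j => A x j ^ 2) (fun j _ => sq_nonneg _)
      (Finset.mem_univ y)).trans (Finset.single_le_sum (f := fun i => ∑ j, A i j ^ 2)
        (fun i _ => Finset.sum_nonneg fun j _ => sq_nonneg _) (Finset.mem_univ x))
  rw [abs_mul]
  nlinarith [hle a b, hle c d, sq_abs (A a b), sq_abs (A c d), sq_nonneg (|A a b| - |A c d|)]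

theorem PosDef.isSymm {A : Matrix n n ℝ} (hA : A.PosDef) : A.IsSymm :=
  isHermitian_iff_isSymm.mp hA.isHermitian

theorem PosDef.add_smul_one [DecidableEq n] {A : Matrix n n ℝ} (hA : A.PosDef) {s : ℝ}
    (hs : 0 ≤ s) : (A + s • 1).PosDef :=
  hA.add_posSemidef (PosSemidef.one.smul hs)

end Matrix

theorem Equiv.Perm.sum_fin_succ {M : Type*} [AddCommMonoid M] {n : ℕ}
    (g : Perm (Fin (n + 1)) → M) :
    ∑ σ, g σ = ∑ p : Fin (n + 1), ∑ τ : Perm (Fin n), g (Perm.decomposeFin.symm (p, τ)) := by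
  rw [← Perm.decomposeFin.symm.sum_comp, Fintype.sum_prod_type]

theorem Equiv.Perm.sum_fin_four {M : Type*} [AddCommMonoid M]
    (g : Fin 4 → Fin 4 → Fin 4 → Fin 4 → M) :
    ∑ σ : Perm (Fin 4), g (σ 0) (σ 1) (σ 2) (σ 3) =
      g 0 1 2 3 + g 0 1 3 2 + g 0 2 1 3 + g 0 2 3 1 + g 0 3 2 1 + g 0 3 1 2 +
      g 1 0 2 3 + g 1 0 3 2 + g 1 2 0 3 + g 1 2 3 0 + g 1 3 2 0 + g 1 3 0 2 +
      g 2 1 0 3 + g 2 1 3 0 + g 2 0 1 3 + g 2 0 3 1 + g 2 3 0 1 + g 2 3 1 0 +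
      g 3 1 2 0 + g 3 1 0 2 + g 3 2 1 0 + g 3 2 0 1 + g 3 0 2 1 + g 3 0 1 2 := by
  simp only [Perm.sum_fin_succ]
  simp only [Fin.sum_univ_succ, Fin.sum_univ_zero, Finset.univ_unique, Finset.sum_singleton,
    Perm.decomposeFin_symm_apply_zero, Perm.decomposeFin_symm_apply_one,
    show (2 : Fin 4) = (1 : Fin 3).succ from rfl, show (3 : Fin 4) = (2 : Fin 3).succ from rfl,
    show (2 : Fin 3) = (1 : Fin 2).succ from rfl, Perm.decomposeFin_symm_apply_succ,
    swap_apply_def]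
  norm_num [Fin.ext_iff]
  abel

section TensorAlgebra

theorem symmetrize_otimes_self {R : Mat3} (hR : R.IsSymm) (i j k l : Fin 3) :
    symmetrize (otimes R R) i j k l = (R i j * R k l + R i k * R j l + R i l * R j k) / 3 := by
  have h : ∀ a b, R b a = R a b := hR.apply
  rw [symmetrize, Equiv.Perm.sum_fin_four (fun a b c d =>
    otimes R R (![i, j, k, l] a) (![i, j, k, l] b) (![i, j, k, l] c) (![i, j, k, l] d))]
  simp only [otimes, cons_val_zero, cons_val_one, cons_val_two, cons_val_three, head_cons,
    tail_cons]
  rw [h i j, h i k, h i l, h j k, h j l, h k l]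
  ring

theorem trace_contr_symmetrize_otimes_self {R : Mat3} (hR : R.IsSymm) (M : Mat3) :
    (contr (symmetrize (otimes R R)) M).trace =
      (R.trace * (R * M).trace + 2 * (R * R * M).trace) / 3 := by
  have h : ∀ a b, R b a = R a b := hR.apply
  simp only [trace, diag, contr, of_apply, symmetrize_otimes_self hR, mul_apply,
    Fin.sum_univ_three]
  rw [h 0 1, h 0 2, h 1 2]
  ring

theorem contr_smul (c : ℝ) (T : Tens4) (M : Mat3) : contr (c • T) M = c • contr T M := by
  ext i j
  simp only [contr, of_apply, Matrix.smul_apply, Pi.smul_apply, smul_eq_mul, Finset.mul_sum,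
    mul_assoc]

variable {α : Type*} [MeasurableSpace α] {μ : Measure α} {T : α → Tens4}

theorem integrable_trace_contr (hT : ∀ i j k l, Integrable (fun x => T x i j k l) μ)
    (M : Mat3) : Integrable (fun x => (contr (T x) M).trace) μ := by
  simp only [trace, diag, contr, of_apply]
  exact integrable_finsetSum _ fun i _ => integrable_finsetSum _ fun k _ =>
    integrable_finsetSum _ fun l _ => (hT i i k l).mul_const _

theorem trace_contr_integral (hT : ∀ i j k l, Integrable (fun x => T x i j k l) μ) (M : Mat3) :
    (contr (fun i j k l => ∫ x, T x i j k l ∂μ) M).trace = ∫ x, (contr (T x) M).trace ∂μ := by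
  have hTM : ∀ i k l, Integrable (fun x => T x i i k l * M k l) μ := fun i k l =>
    (hT i i k l).mul_const _
  simp only [trace, diag, contr, of_apply]
  rw [integral_finsetSum _ fun i _ => integrable_finsetSum _ fun k _ =>
    integrable_finsetSum _ fun l _ => hTM i k l]
  refine Finset.sum_congr rfl fun i _ => ?_
  rw [integral_finsetSum _ fun k _ => integrable_finsetSum _ fun l _ => hTM i k l]
  refine Finset.sum_congr rfl fun k _ => ?_
  rw [integral_finsetSum _ fun l _ => hTM i k l]
  exact Finset.sum_congr rfl fun l _ => (integral_mul_const _ _).symm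

end TensorAlgebra

theorem isSymm_res {B : Mat3} (hB : B.IsSymm) (s : ℝ) : (res B s).IsSymm :=
  (hB.add (isSymm_one.smul s)).inv

section Resolvent

variable (B M : Mat3)

theorem res_eq_inv_det_smul_adjugate (s : ℝ) :
    res B s = (B + s • 1).det⁻¹ • (B + s • 1).adjugate := by
  rw [res, inv_def, Ring.inverse_eq_inv]

theorem hasDerivAt_det_add_smul_one (s : ℝ) :
    HasDerivAt (fun t => (B + t • (1 : Mat3)).det) (B + s • 1).adjugate.trace s := by
  simp_rw [det_add_smul_one_fin_three]
  refine ((((hasDerivAt_pow 3 s).add ((hasDerivAt_pow 2 s).const_mul B.trace)).add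
    ((hasDerivAt_id s).const_mul B.adjugate.trace)).add_const B.det).congr_deriv ?_
  simp [adjugate_add_smul_one_fin_three, trace_add, trace_smul, trace_sub]
  ring

theorem hasDerivAt_trace_adjugate_add_smul_one_mul (s : ℝ) :
    HasDerivAt (fun t => ((B + t • (1 : Mat3)).adjugate * M).trace)
      ((((B + s • 1).trace • 1 - (B + s • 1)) * M).trace) s := by
  simp_rw [adjugate_add_smul_one_fin_three, add_mul, smul_mul, one_mul, trace_add, trace_smul,
    smul_eq_mul]
  refine ((((hasDerivAt_pow 2 s).mul_const M.trace).add
    ((hasDerivAt_id s).mul_const _)).add_const _).congr_deriv ?_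
  simp [sub_mul, trace_sub, trace_add, trace_smul, add_mul]
  ring

noncomputable def tracePrimitive (s : ℝ) : ℝ := (res B s * M).trace / √(B + s • 1).det

noncomputable def traceDensity (s : ℝ) : ℝ :=
  ((res B s).trace * (res B s * M).trace + 2 * (res B s * res B s * M).trace) /
    √(B + s • 1).det

theorem hasDerivAt_tracePrimitive {s : ℝ} (hs : 0 < (B + s • 1).det) :
    HasDerivAt (tracePrimitive B M) (-(traceDensity B M s / 2)) s := by
  have hF : tracePrimitive B M = fun t =>
      ((B + t • 1).adjugate * M).trace / ((B + t • 1).det * √(B + t • 1).det) := by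
    funext t
    rw [tracePrimitive, res_eq_inv_det_smul_adjugate, smul_mul, trace_smul, smul_eq_mul,
      div_mul_eq_div_div, inv_mul_eq_div]
  have hp := hasDerivAt_det_add_smul_one B s
  rw [hF]
  refine ((hasDerivAt_trace_adjugate_add_smul_one_mul B M s).div (hp.mul (hp.sqrt hs.ne'))
    (mul_pos hs (Real.sqrt_pos.2 hs)).ne').congr_deriv ?_
  simp only [traceDensity, res_eq_inv_det_smul_adjugate, smul_mul, Matrix.mul_smul, trace_smul,
    smul_eq_mul, trace_adjugate_mul_adjugate_mul_fin_three, Pi.mul_apply]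
  have hsq := Real.sq_sqrt hs.le
  have hpos := Real.sqrt_pos.2 hs
  generalize √(B + s • 1).det = r at *
  generalize (B + s • 1).det = p at *
  subst hsq
  field_simp
  ring

theorem tendsto_tracePrimitive_atTop : Tendsto (tracePrimitive B M) atTop (𝓝 0) := by
  have hY : Tendsto (fun t : ℝ => t⁻¹ • B + 1) atTop (𝓝 1) := by
    have h := ((tendsto_inv_atTop_zero (𝕜 := ℝ)).smul_const B).add_const (1 : Mat3)
    rwa [zero_smul, zero_add] at h
  have hYinv : Tendsto (fun t : ℝ => (t⁻¹ • B + 1)⁻¹) atTop (𝓝 1) := by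
    have h := continuousAt_matrix_inv (1 : Mat3)
      (by rw [det_one, Ring.inverse_eq_inv']; exact continuousAt_inv₀ one_ne_zero)
    have h' := h.tendsto.comp hY
    rwa [inv_one] at h'
  have hdetY : Tendsto (fun t : ℝ => (t⁻¹ • B + 1).det) atTop (𝓝 1) := by
    have h := (continuous_id.matrix_det.tendsto (1 : Mat3)).comp hY
    rwa [id, det_one] at h
  have hscale : ∀ t : ℝ, t ≠ 0 → B + t • 1 = t • (t⁻¹ • B + 1) := fun t ht => by
    rw [smul_add, smul_smul, mul_inv_cancel₀ ht, one_smul]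
  have hnum : Tendsto (fun t => (res B t * M).trace) atTop (𝓝 0) := by
    have hYM : Tendsto (fun t : ℝ => ((t⁻¹ • B + 1)⁻¹ * M).trace) atTop (𝓝 M.trace) := by
      have h := ((continuous_mul_const M).matrix_trace.tendsto (1 : Mat3)).comp hYinv
      rwa [one_mul] at h
    have h := (tendsto_inv_atTop_zero (𝕜 := ℝ)).mul hYM
    rw [zero_mul] at h
    refine h.congr' ?_
    filter_upwards [eventually_ne_atTop 0] with t ht
    rw [res_eq_inv_det_smul_adjugate, hscale t ht, det_smul, adjugate_smul, smul_smul, inv_def,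
      Ring.inverse_eq_inv, smul_mul, smul_mul, trace_smul, trace_smul, smul_eq_mul, smul_eq_mul,
      Fintype.card_fin, mul_inv, ← mul_assoc]
    congr 1
    field_simp
  have hden : Tendsto (fun t : ℝ => √(B + t • 1).det) atTop atTop := by
    refine Real.tendsto_sqrt_atTop.comp
      (((tendsto_pow_atTop (α := ℝ) three_ne_zero).atTop_mul_pos one_pos hdetY).congr' ?_)
    filter_upwards [eventually_ne_atTop 0] with t ht
    rw [hscale t ht, det_smul, Fintype.card_fin]
  exact hnum.div_atTop hden

end Resolvent

noncomputable def ctensDensity (B : Mat3) (s : ℝ) : Tens4 := fun i j k l =>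
  3 / 4 * (symmetrize (otimes (res B s) (res B s)) i j k l / √(B + s • 1).det)

theorem Ctens_eq_integral_ctensDensity (B : Mat3) :
    Ctens B = fun i j k l => ∫ s in Ioi 0, ctensDensity B s i j k l := by
  funext i j k l
  simp only [Ctens, ctensDensity, integral_const_mul]

section Integration

variable {B : Mat3}

theorem traceDensity_one_nonneg (hB : B.IsSymm) (s : ℝ) : 0 ≤ traceDensity B 1 s := by
  rw [traceDensity, mul_one, mul_one, (isSymm_res hB s).trace_mul_self]
  exact div_nonneg (add_nonneg (mul_self_nonneg _) (by positivity)) (Real.sqrt_nonneg _)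

theorem abs_res_mul_res_div_sqrt_le_traceDensity_one (hB : B.IsSymm) (s : ℝ) (a b c d : Fin 3) :
    |res B s a b * res B s c d / √(B + s • 1).det| ≤ traceDensity B 1 s := by
  have hR := isSymm_res hB s
  have h0 : 0 ≤ (res B s * res B s).trace := by rw [hR.trace_mul_self]; positivity
  rw [abs_div, abs_of_nonneg (Real.sqrt_nonneg _), traceDensity, mul_one, mul_one]
  gcongr
  nlinarith [hR.abs_mul_apply_le_trace_mul_self a b c d, mul_self_nonneg (res B s).trace]

theorem integrableOn_traceDensity_one (hB : B.PosDef) :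
    IntegrableOn (traceDensity B 1) (Ioi 0) := by
  have h := integrableOn_Ioi_deriv_of_nonpos'
    (fun s hs => hasDerivAt_tracePrimitive B 1 (hB.add_smul_one hs).det_pos)
    (fun s _ => by linarith [traceDensity_one_nonneg hB.isSymm s])
    (tendsto_tracePrimitive_atTop B 1)
  exact IntegrableOn.congr_fun (h.neg.const_mul 2)
    (fun s _ => by simp only [Pi.neg_apply]; ring) measurableSet_Ioi

theorem integrableOn_res_mul_res_div_sqrt_det (hB : B.PosDef) (a b c d : Fin 3) :
    IntegrableOn (fun s => res B s a b * res B s c d / √(B + s • 1).det) (Ioi 0) := by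
  refine (integrableOn_traceDensity_one hB).mono' ?_ (ae_of_all _ fun s =>
    abs_res_mul_res_div_sqrt_le_traceDensity_one hB.isSymm s a b c d)
  have hdet : Measurable fun s : ℝ => (B + s • 1).det :=
    (by fun_prop : Continuous fun s : ℝ => (B + s • 1).det).measurable
  have hadj : ∀ x y, Measurable fun s : ℝ => (B + s • 1).adjugate x y := fun x y =>
    ((by fun_prop : Continuous fun s : ℝ => (B + s • 1).adjugate).matrix_elem x y).measurable
  simp only [res_eq_inv_det_smul_adjugate, Matrix.smul_apply, smul_eq_mul]
  exact (((hdet.inv.mul (hadj a b)).mul (hdet.inv.mul (hadj c d))).div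
    hdet.sqrt).aestronglyMeasurable

theorem integrableOn_ctensDensity_apply (hB : B.PosDef) (i j k l : Fin 3) :
    IntegrableOn (fun s => ctensDensity B s i j k l) (Ioi 0) := by
  have h := ((integrableOn_res_mul_res_div_sqrt_det hB i j k l).add
    (integrableOn_res_mul_res_div_sqrt_det hB i k j l)).add
    (integrableOn_res_mul_res_div_sqrt_det hB i l j k)
  refine IntegrableOn.congr_fun (h.const_mul (1 / 4)) (fun s _ => ?_) measurableSet_Ioi
  simp only [ctensDensity, Pi.add_apply, symmetrize_otimes_self (isSymm_res hB.isSymm s)]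
  ring

theorem trace_contr_ctensDensity (hB : B.IsSymm) (M : Mat3) (s : ℝ) :
    (contr (ctensDensity B s) M).trace = traceDensity B M s / 4 := by
  have h : ctensDensity B s =
      (3 / 4 / √(B + s • 1).det) • symmetrize (otimes (res B s) (res B s)) := by
    funext i j k l
    simp only [ctensDensity, Pi.smul_apply, smul_eq_mul]
    ring
  rw [h, contr_smul, trace_smul, trace_contr_symmetrize_otimes_self (isSymm_res hB s),
    traceDensity, smul_eq_mul]
  ring

theorem integral_traceDensity (hB : B.PosDef) (M : Mat3) :
    ∫ s in Ioi 0, traceDensity B M s = 2 * (B⁻¹ * M).trace / √B.det := by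
  have hint : IntegrableOn (traceDensity B M) (Ioi 0) := by
    refine IntegrableOn.congr_fun
      ((integrable_trace_contr (integrableOn_ctensDensity_apply hB) M).const_mul 4)
      (fun s _ => ?_) measurableSet_Ioi
    simp only [trace_contr_ctensDensity hB.isSymm]
    ring
  have h := integral_Ioi_of_hasDerivAt_of_tendsto'
    (fun s hs => hasDerivAt_tracePrimitive B M (hB.add_smul_one hs).det_pos)
    (hint.div_const 2).neg (tendsto_tracePrimitive_atTop B M)
  rw [integral_neg, integral_div] at h
  simp only [tracePrimitive, res, zero_smul, add_zero] at h
  linear_combination -2 * h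

end Integration

theorem trace_inv_mul_eq_two_trace_Ctens_general (B : Mat3) (hB : B.PosDef) (hdet : B.det = 1)
    (M : Mat3) :
    (B⁻¹ * M).trace = 2 * (contr (Ctens B) M).trace := by
  rw [Ctens_eq_integral_ctensDensity, trace_contr_integral (integrableOn_ctensDensity_apply hB)]
  simp only [trace_contr_ctensDensity hB.isSymm]
  rw [integral_div, integral_traceDensity hB, hdet, Real.sqrt_one]
  ring

theorem trace_inv_mul_eq_two_trace_Ctens (B : Mat3) (hB : B.PosDef) (hdet : B.det = 1)
    (M : Mat3) (hM : Mᵀ = M) :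
    (B⁻¹ * M).trace = 2 * (contr (Ctens B) M).trace :=
  trace_inv_mul_eq_two_trace_Ctens_general B hB hdet M
end

section
/- Let K be a real symmetric 3×3 matrix and M a real symmetric 3×3 matrix. Then M:S(K⊗K):M = (1/3)·(tr(K·M))² + (2/3)·tr(K·M·K·M). In particular, if K is positive definite and M ≠ 0, then M:S(K⊗K):M > 0. -/
open Matrix MeasureTheory

/-!
For symmetric `K` the 24 permutations of `K_{ij} K_{kl}` take only three distinct values, each
eight times, so `S(K ⊗ K)_{ijkl} = (K_{ij} K_{kl} + K_{ik} K_{jl} + K_{il} K_{jk}) / 3`.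
Contracting with a symmetric `M` on both sides, the first pairing gives `tr(KM)²` and the other
two give `tr(KMKM)` each. For positive definite `K = B²` with `B` symmetric and invertible,
`tr(KMKM) = tr(C C)` with `C = BMB` symmetric and nonzero, which is the squared Frobenius norm
of `C` and hence positive.
-/

theorem Equiv.Perm.sum_fin_succ_s7 {β : Type*} [AddCommMonoid β] {n : ℕ}
    (f : Equiv.Perm (Fin (n + 1)) → β) :
    ∑ σ, f σ = ∑ p, ∑ e, f (Equiv.Perm.decomposeFin.symm (p, e)) := by
  rw [← Equiv.Perm.decomposeFin.symm.sum_comp, Fintype.sum_prod_type]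

theorem symmetrize_otimes_self_apply {K : Mat3} (hK : K.IsSymm) (i j k l : Fin 3) :
    symmetrize (otimes K K) i j k l
      = (K i j * K k l + K i k * K j l + K i l * K j k) / 3 := by
  -- numerals are turned into `Fin.succ` form so that `decomposeFin_symm_apply_succ` applies
  simp only [symmetrize, otimes, Equiv.Perm.sum_fin_succ_s7, Fin.sum_univ_succ, Finset.univ_unique,
    Finset.sum_singleton, ← Fin.succ_zero_eq_one', ← Fin.succ_one_eq_two',
    show (3 : Fin 4) = Fin.succ 2 from rfl, Equiv.Perm.decomposeFin_symm_apply_zero,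
    Equiv.Perm.decomposeFin_symm_apply_succ]
  simp only [Fin.isValue, cons_val_zero, cons_val_one, cons_val, Fin.reduceSucc,
    Equiv.swap_self, Equiv.refl_apply, Equiv.Perm.default_eq, Equiv.Perm.coe_one, id_eq,
    Fin.default_eq_zero, Equiv.swap_apply_right, Equiv.swap_apply_def, Fin.reduceEq, ↓reduceIte,
    one_ne_zero]
  rw [hK.apply i j, hK.apply i k, hK.apply i l, hK.apply j k, hK.apply j l, hK.apply k l]
  ring

theorem dcontr_symmetrize_otimes_self {K M : Mat3} (hK : K.IsSymm) (hM : M.IsSymm) :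
    dcontr M (symmetrize (otimes K K)) M
      = (1 / 3) * (K * M).trace ^ 2 + (2 / 3) * (K * M * K * M).trace := by
  simp only [dcontr, symmetrize_otimes_self_apply hK, trace, diag, mul_apply, Fin.sum_univ_three]
  rw [hK.apply 0 1, hK.apply 0 2, hK.apply 1 2, hM.apply 0 1, hM.apply 0 2, hM.apply 1 2]
  ring

open scoped MatrixOrder in
theorem Matrix.PosDef.trace_mul_mul_mul_pos {n : Type*} [Fintype n] [DecidableEq n]
    {K M : Matrix n n ℝ} (hK : K.PosDef) (hM : M.IsHermitian) (hM0 : M ≠ 0) :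
    0 < (K * M * K * M).trace := by
  obtain ⟨B, hBu, hB, rfl⟩ :=
    CStarAlgebra.isStrictlyPositive_iff_exists_isUnit_and_isSelfAdjoint_and_eq_mul_self.mp
      hK.isStrictlyPositive
  have hBh : Bᴴ = B := hB
  set C := B * M * B
  have hC : Cᴴ = C := by simp only [C, conjTranspose_mul, hM.eq, hBh, Matrix.mul_assoc]
  have hC0 : C ≠ 0 := fun h => hM0 (hBu.mul_right_eq_zero.mp (hBu.mul_left_eq_zero.mp h))
  have htr : (B * B * M * (B * B) * M).trace = (Cᴴ * C).trace := by
    rw [hC]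
    simp only [C, Matrix.mul_assoc]
    rw [trace_mul_comm]
    simp only [Matrix.mul_assoc]
  rw [htr]
  exact (posSemidef_conjTranspose_mul_self C).trace_nonneg.lt_of_ne'
    (trace_conjTranspose_mul_self_eq_zero_iff.not.mpr hC0)

theorem dcontr_symmetrize_otimes (K M : Mat3) (hK : Kᵀ = K) (hM : Mᵀ = M) :
    dcontr M (symmetrize (otimes K K)) M
        = (1 / 3) * (K * M).trace ^ 2 + (2 / 3) * (K * M * K * M).trace
      ∧ (K.PosDef → M ≠ 0 → 0 < dcontr M (symmetrize (otimes K K)) M) := by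
  have h := dcontr_symmetrize_otimes_self hK hM
  refine ⟨h, fun hKpd hM0 => ?_⟩
  have htr := hKpd.trace_mul_mul_mul_pos (isHermitian_iff_isSymm.mpr hM) hM0
  rw [h]
  positivity
end

section
/- Let B : (a,b) → (real symmetric positive definite 3×3 matrices) be differentiable with det B(t) = 1 for all t ∈ (a,b). Then the function t ↦ tr(A(B(t))) is constant on (a,b). -/
open Matrix MeasureTheory

/-!
Along the ray `s ↦ B + s • 1`, Jacobi's formula gives
`d/ds det (B + s • 1) = det (B + s • 1) * tr (B + s • 1)⁻¹`, so the integrand of `tr A(B)`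
is `1/2` times the derivative of `-2 / √(det (B + s • 1))`. For positive definite `B` this
function is increasing, and it tends to `0` because `det (B + s • 1) ~ s ^ 3`. Hence
`tr A(B) = 1 / √(det B)`, which is `1` whenever `det B = 1`.
-/

open Set Filter Topology Polynomial

theorem HasDerivAt.neg_two_div_sqrt {D : ℝ → ℝ} {D' s : ℝ} (hD : HasDerivAt D D' s)
    (hpos : 0 < D s) : HasDerivAt (fun u => -2 / √(D u)) (D' / (D s * √(D s))) s := by
  have hsqrt : √(D s) ≠ 0 := (Real.sqrt_pos.2 hpos).ne'
  have h := ((hD.sqrt hpos.ne').inv hsqrt).const_mul (-2)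
  refine (h.congr_deriv ?_).congr_of_eventuallyEq (.of_forall fun u => div_eq_mul_inv _ _)
  rw [Real.sq_sqrt hpos.le]
  field_simp

namespace Matrix

section Jacobi

variable {ι 𝕜 : Type*} [Fintype ι] [DecidableEq ι] [NontriviallyNormedField 𝕜]

theorem hasDerivAt_det_one_add_smul (M : Matrix ι ι 𝕜) :
    HasDerivAt (fun r : 𝕜 => det (1 + r • M)) (trace M) 0 := by
  have h := (det (1 + (X : 𝕜[X]) • M.map C)).hasDerivAt 0
  rw [derivative_det_one_add_X_smul] at h
  convert h using 1
  ext r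
  simp [eval_det, ← smul_eq_mul_diagonal]

theorem hasDerivAt_det_add_smul_one (B : Matrix ι ι 𝕜) {s : 𝕜}
    (hs : IsUnit (B + s • 1).det) :
    HasDerivAt (fun u : 𝕜 => det (B + u • 1))
      (det (B + s • 1) * trace (B + s • 1)⁻¹) s := by
  set M := B + s • 1
  have hM : ∀ u : 𝕜, B + u • 1 = M * (1 + (u - s) • M⁻¹) := by
    intro u
    rw [mul_add, mul_one, mul_smul_comm, mul_nonsing_inv _ hs, sub_smul]
    simp only [M]
    abel
  simp only [hM, det_mul]
  have h : HasDerivAt (fun r : 𝕜 => det M * det (1 + r • M⁻¹))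
      (det M * trace M⁻¹) (s - s) := by
    rw [sub_self]
    exact (hasDerivAt_det_one_add_smul M⁻¹).const_mul _
  exact h.comp_sub_const s s

end Jacobi

variable {ι : Type*}

theorem PosDef.add_smul_one_s16 [DecidableEq ι] {B : Matrix ι ι ℝ} (hB : B.PosDef) {s : ℝ}
    (hs : 0 ≤ s) :
    (B + s • 1).PosDef :=
  hB.add_posSemidef (PosSemidef.one.smul hs)

theorem PosSemidef.diag_le_trace [Fintype ι] {A : Matrix ι ι ℝ} (hA : A.PosSemidef) (i : ι) :
    A i i ≤ trace A :=
  Finset.single_le_sum (f := fun j => A j j) (fun _ _ => hA.diag_nonneg) (Finset.mem_univ i)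

variable [Fintype ι] [DecidableEq ι]

theorem measurable_inv_add_smul_one_apply (B : Matrix ι ι ℝ) (i j : ι) :
    Measurable fun s : ℝ => (B + s • 1)⁻¹ i j := by
  have hc : Continuous fun s : ℝ => B + s • (1 : Matrix ι ι ℝ) := by fun_prop
  simp only [inv_def, Ring.inverse_eq_inv', Matrix.smul_apply, smul_eq_mul]
  exact hc.matrix_det.measurable.inv.mul (hc.matrix_adjugate.matrix_elem i j).measurable

theorem tendsto_det_add_smul_one_atTop [Nonempty ι] (B : Matrix ι ι ℝ) :
    Tendsto (fun s : ℝ => det (B + s • 1)) atTop atTop := by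
  have hdet : Tendsto (fun s : ℝ => det (1 + s⁻¹ • B)) atTop (𝓝 1) := by
    have hcont : Continuous fun r : ℝ => det (1 + r • B) := by fun_prop
    have h0 : Tendsto (fun r : ℝ => det (1 + r • B)) (𝓝 0) (𝓝 1) := by
      simpa using hcont.tendsto 0
    exact h0.comp tendsto_inv_atTop_zero
  have hpow : Tendsto (fun s : ℝ => s ^ Fintype.card ι) atTop atTop :=
    tendsto_pow_atTop Fintype.card_ne_zero
  refine (hpow.atTop_mul_pos one_pos hdet).congr' ?_
  -- `det (B + s • 1) = s ^ n * det (1 + s⁻¹ • B)`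
  filter_upwards [eventually_gt_atTop 0] with s hs
  rw [← det_smul, smul_add, smul_smul, mul_inv_cancel₀ hs.ne', one_smul, add_comm]

theorem tendsto_neg_two_div_sqrt_det_atTop [Nonempty ι] (B : Matrix ι ι ℝ) :
    Tendsto (fun s : ℝ => -2 / √(det (B + s • 1))) atTop (𝓝 0) :=
  tendsto_const_nhds.div_atTop (Real.tendsto_sqrt_atTop.comp (tendsto_det_add_smul_one_atTop B))

namespace PosDef

variable {B : Matrix ι ι ℝ} (hB : B.PosDef)
include hB

theorem hasDerivAt_neg_two_div_sqrt_det {s : ℝ} (hs : 0 ≤ s) :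
    HasDerivAt (fun u : ℝ => -2 / √(det (B + u • 1)))
      (trace (B + s • 1)⁻¹ / √(det (B + s • 1))) s := by
  have hdet := (hB.add_smul_one_s16 hs).det_pos
  convert (hasDerivAt_det_add_smul_one B hdet.ne'.isUnit).neg_two_div_sqrt hdet using 1
  field_simp

theorem trace_inv_add_smul_one_div_sqrt_det_nonneg {s : ℝ} (hs : 0 ≤ s) :
    0 ≤ trace (B + s • 1)⁻¹ / √(det (B + s • 1)) :=
  div_nonneg (hB.add_smul_one_s16 hs).inv.posSemidef.trace_nonneg (Real.sqrt_nonneg _)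

variable [Nonempty ι]

theorem integrableOn_trace_inv_div_sqrt_det :
    IntegrableOn (fun s : ℝ => trace (B + s • 1)⁻¹ / √(det (B + s • 1))) (Ioi 0) :=
  integrableOn_Ioi_deriv_of_nonneg' (fun _ hs => hB.hasDerivAt_neg_two_div_sqrt_det hs)
    (fun _ hs => hB.trace_inv_add_smul_one_div_sqrt_det_nonneg (le_of_lt hs))
    (tendsto_neg_two_div_sqrt_det_atTop B)

theorem integral_trace_inv_div_sqrt_det :
    ∫ s in Ioi (0 : ℝ), trace (B + s • 1)⁻¹ / √(det (B + s • 1)) = 2 / √(det B) := by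
  rw [integral_Ioi_of_hasDerivAt_of_nonneg' (fun _ hs => hB.hasDerivAt_neg_two_div_sqrt_det hs)
    (fun _ hs => hB.trace_inv_add_smul_one_div_sqrt_det_nonneg (le_of_lt hs))
    (tendsto_neg_two_div_sqrt_det_atTop B)]
  simp [neg_div]

end PosDef

end Matrix

theorem trace_Amat {B : Mat3} (hB : B.PosDef) : (Amat B).trace = (√B.det)⁻¹ := by
  set f : Fin 3 → ℝ → ℝ := fun i s => res B s i i / √(B + s • 1).det
  have hsum : ∀ s, ∑ i, f i s = trace (B + s • 1)⁻¹ / √(B + s • 1).det := fun s => by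
    simp [f, res, trace, Finset.sum_div]
  have hint : ∀ i, IntegrableOn (f i) (Ioi 0) := by
    refine fun i => hB.integrableOn_trace_inv_div_sqrt_det.mono'
      ((measurable_inv_add_smul_one_apply B i i).div ?_).aestronglyMeasurable ?_
    · exact (by fun_prop : Continuous fun s : ℝ => √(det (B + s • 1))).measurable
    · refine (ae_restrict_iff' measurableSet_Ioi).2 (.of_forall fun s hs => ?_)
      simp only [f, res]
      have hinv := (hB.add_smul_one_s16 (le_of_lt hs)).inv.posSemidef
      rw [Real.norm_of_nonneg (div_nonneg hinv.diag_nonneg (Real.sqrt_nonneg _))]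
      exact div_le_div_of_nonneg_right (hinv.diag_le_trace i) (Real.sqrt_nonneg _)
  calc (Amat B).trace = 1 / 2 * ∫ s in Ioi 0, ∑ i, f i s := by
        rw [integral_finsetSum _ fun i _ => hint i, Finset.mul_sum]
        rfl
    _ = (√B.det)⁻¹ := by
        simp_rw [hsum, hB.integral_trace_inv_div_sqrt_det]
        ring

attribute [local instance] Matrix.frobeniusNormedAddCommGroup Matrix.frobeniusNormedSpace

theorem trace_Amat_const_general (a b : ℝ) (B : ℝ → Mat3)
    (hpos : ∀ t ∈ Set.Ioo a b, (B t).PosDef)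
    (hdet : ∀ t ∈ Set.Ioo a b, (B t).det = 1) :
    ∃ c : ℝ, ∀ t ∈ Set.Ioo a b, (Amat (B t)).trace = c :=
  ⟨1, fun t ht => by rw [trace_Amat (hpos t ht), hdet t ht, Real.sqrt_one, inv_one]⟩

theorem trace_Amat_const (a b : ℝ) (B : ℝ → Mat3)
    (hpos : ∀ t ∈ Set.Ioo a b, (B t).PosDef)
    (hdet : ∀ t ∈ Set.Ioo a b, (B t).det = 1)
    (hdiff : DifferentiableOn ℝ B (Set.Ioo a b)) :
    ∃ c : ℝ, ∀ t ∈ Set.Ioo a b, (Amat (B t)).trace = c :=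
  trace_Amat_const_general a b B hpos hdet
end
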